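/- Let G = (V,E) be a connected graph with maximum degree d_max and let P_M be the lazy Metropolis chain: P_M(v,u) = 1/(2 max{d_v, d_u}) for {v,u} ∈ E, P_M(v,v) = 1 − Σ_{u: {v,u}∈E} P_M(v,u), and 0 otherwise. Then Ψ_2(P_M) ≤ 2√(d_max). -/

import Mathlib

/-!
Write `f_t = P^t δ_w` and `E_t = ‖f_t‖²`. For a doubly stochastic `P` the Dirichlet form is
`Σ_{v,u} P(v,u) (f v - f u)² = 2 (‖f‖² - ⟨f, P f⟩)`, and laziness gives `‖P f‖² ≤ ⟨f, P f⟩`,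
because `2P - I` is again doubly stochastic and hence an `ℓ²` contraction. So the Dirichlet form
of `f_t` is at most `2 (E_t - E_{t+1})`, which telescopes to a total of at most `2 E_0 = 2`.
Every positive off-diagonal Metropolis entry is at least `1 / (2 d_max)`, so the unweighted edge
sum in `Ψ₂` is at most `2 d_max` times the Dirichlet form, and `Ψ₂(P_M)² ≤ 4 d_max`.
-/

open Finset Matrix

section DirichletForm

variable {V : Type*} [Fintype V]

def dirichletForm (P : Matrix V V ℝ) (f : V → ℝ) : ℝ :=
  ∑ v, ∑ u, P v u * (f v - f u) ^ 2

lemma dirichletForm_nonneg {P : Matrix V V ℝ} (hP : ∀ v u, 0 ≤ P v u) (f : V → ℝ) :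
    0 ≤ dirichletForm P f :=
  sum_nonneg fun v _ => sum_nonneg fun u _ => mul_nonneg (hP v u) (sq_nonneg _)

lemma sum_ite_pos_sq_le_mul_dirichletForm {P : Matrix V V ℝ} (hnn : ∀ v u, 0 ≤ P v u)
    {K : ℝ} (hK : 0 ≤ K) (hpos : ∀ v u, v ≠ u → 0 < P v u → 1 ≤ K * P v u) (f : V → ℝ) :
    ∑ v, ∑ u, (if 0 < P v u then (f v - f u) ^ 2 else 0) ≤ K * dirichletForm P f := by
  rw [dirichletForm, mul_sum]
  refine sum_le_sum fun v _ => ?_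
  rw [mul_sum]
  refine sum_le_sum fun u _ => ?_
  split_ifs with h
  · rcases eq_or_ne v u with rfl | hvu
    · simp
    · nlinarith [hpos v u hvu h, sq_nonneg (f v - f u)]
  · exact mul_nonneg hK (mul_nonneg (hnn v u) (sq_nonneg _))

end DirichletForm

section DoublyStochastic

variable {V : Type*} [Fintype V] [DecidableEq V]

lemma sq_mulVec_apply_le_mulVec_sq {Q : Matrix V V ℝ} (hQ : Q ∈ rowStochastic ℝ V)
    (f : V → ℝ) (v : V) : (Q *ᵥ f) v ^ 2 ≤ (Q *ᵥ f ^ 2) v := by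
  simpa [mulVec, dotProduct] using
    (even_two.convexOn_pow (𝕜 := ℝ)).map_sum_le (t := univ) (w := Q v) (p := f)
      (fun u _ => nonneg_of_mem_rowStochastic hQ) (sum_row_of_mem_rowStochastic hQ v)
      (fun u _ => Set.mem_univ _)

lemma mulVec_dotProduct_mulVec_le_of_mem_doublyStochastic {Q : Matrix V V ℝ}
    (hQ : Q ∈ doublyStochastic ℝ V) (f : V → ℝ) : (Q *ᵥ f) ⬝ᵥ (Q *ᵥ f) ≤ f ⬝ᵥ f := by
  have hrow := (mem_doublyStochastic_iff_mem_rowStochastic_and_mem_colStochastic.1 hQ).1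
  calc (Q *ᵥ f) ⬝ᵥ (Q *ᵥ f) = ∑ v, (Q *ᵥ f) v ^ 2 := by simp [dotProduct, sq]
    _ ≤ ∑ v, (Q *ᵥ f ^ 2) v := sum_le_sum fun v _ => sq_mulVec_apply_le_mulVec_sq hrow f v
    _ = ∑ v, f v ^ 2 := by rw [sum_mulVec_of_mem_doublyStochastic hQ]; rfl
    _ = f ⬝ᵥ f := by simp [dotProduct, sq]

lemma two_smul_sub_one_mem_doublyStochastic {P : Matrix V V ℝ}
    (hP : P ∈ doublyStochastic ℝ V) (hlazy : ∀ v, 1 / 2 ≤ P v v) :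
    (2 : ℝ) • P - 1 ∈ doublyStochastic ℝ V := by
  rw [mem_doublyStochastic_iff_sum] at hP ⊢
  obtain ⟨hnn, hrow, hcol⟩ := hP
  refine ⟨fun v u => ?_, fun v => ?_, fun u => ?_⟩
  · rcases eq_or_ne v u with rfl | h
    · simp only [Matrix.sub_apply, Matrix.smul_apply, one_apply_eq, smul_eq_mul]
      linarith [hlazy v]
    · simpa [one_apply_ne h] using hnn v u
  · simp only [Matrix.sub_apply, Matrix.smul_apply, smul_eq_mul, one_apply, sum_sub_distrib,
      ← mul_sum, hrow, sum_ite_eq, mem_univ, ↓reduceIte]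
    norm_num
  · simp only [Matrix.sub_apply, Matrix.smul_apply, smul_eq_mul, one_apply, sum_sub_distrib,
      ← mul_sum, hcol, sum_ite_eq', mem_univ, ↓reduceIte]
    norm_num

lemma mulVec_dotProduct_mulVec_le_dotProduct_mulVec {P : Matrix V V ℝ}
    (hP : P ∈ doublyStochastic ℝ V) (hlazy : ∀ v, 1 / 2 ≤ P v v) (f : V → ℝ) :
    (P *ᵥ f) ⬝ᵥ (P *ᵥ f) ≤ f ⬝ᵥ (P *ᵥ f) := by
  have h := mulVec_dotProduct_mulVec_le_of_mem_doublyStochastic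
    (two_smul_sub_one_mem_doublyStochastic hP hlazy) f
  simp only [sub_mulVec, smul_mulVec, one_mulVec, sub_dotProduct, dotProduct_sub,
    smul_dotProduct, dotProduct_smul, smul_eq_mul, dotProduct_comm (P *ᵥ f) f] at h
  linarith

lemma dirichletForm_eq_of_mem_doublyStochastic {P : Matrix V V ℝ}
    (hP : P ∈ doublyStochastic ℝ V) (f : V → ℝ) :
    dirichletForm P f = 2 * (f ⬝ᵥ f - f ⬝ᵥ (P *ᵥ f)) := by
  obtain ⟨-, hrow, hcol⟩ := mem_doublyStochastic_iff_sum.1 hP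
  have hleft : ∑ v, ∑ u, P v u * f v ^ 2 = f ⬝ᵥ f := by
    simp [← sum_mul, hrow, dotProduct, sq]
  have hright : ∑ v, ∑ u, P v u * f u ^ 2 = f ⬝ᵥ f := by
    rw [sum_comm]; simp [← sum_mul, hcol, dotProduct, sq]
  have hcross : ∑ v, ∑ u, P v u * (f v * f u) = f ⬝ᵥ (P *ᵥ f) := by
    simp only [dotProduct, mulVec, mul_sum]; congr! 2; ring
  calc dirichletForm P f
      = ∑ v, ∑ u, P v u * f v ^ 2 + ∑ v, ∑ u, P v u * f u ^ 2
          - 2 * ∑ v, ∑ u, P v u * (f v * f u) := by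
        simp only [dirichletForm, mul_sum, ← sum_add_distrib, ← sum_sub_distrib]
        congr! 2; ring
    _ = 2 * (f ⬝ᵥ f - f ⬝ᵥ (P *ᵥ f)) := by rw [hleft, hright, hcross]; ring

lemma dirichletForm_le {P : Matrix V V ℝ} (hP : P ∈ doublyStochastic ℝ V)
    (hlazy : ∀ v, 1 / 2 ≤ P v v) (f : V → ℝ) :
    dirichletForm P f ≤ 2 * (f ⬝ᵥ f - (P *ᵥ f) ⬝ᵥ (P *ᵥ f)) := by
  rw [dirichletForm_eq_of_mem_doublyStochastic hP]
  linarith [mulVec_dotProduct_mulVec_le_dotProduct_mulVec hP hlazy f]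

lemma sum_range_dirichletForm_pow_mulVec_le {P : Matrix V V ℝ}
    (hP : P ∈ doublyStochastic ℝ V) (hlazy : ∀ v, 1 / 2 ≤ P v v) (f : V → ℝ) (n : ℕ) :
    ∑ t ∈ range n, dirichletForm P (P ^ t *ᵥ f) ≤ 2 * (f ⬝ᵥ f) := by
  set E : ℕ → ℝ := fun t => (P ^ t *ᵥ f) ⬝ᵥ (P ^ t *ᵥ f)
  have hstep (t : ℕ) : dirichletForm P (P ^ t *ᵥ f) ≤ 2 * (E t - E (t + 1)) := by
    simpa only [E, pow_succ', ← mulVec_mulVec] using dirichletForm_le hP hlazy (P ^ t *ᵥ f)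
  have hE : 0 ≤ E n := dotProduct_self_star_nonneg _
  calc ∑ t ∈ range n, dirichletForm P (P ^ t *ᵥ f)
      ≤ ∑ t ∈ range n, 2 * (E t - E (t + 1)) := sum_le_sum fun t _ => hstep t
    _ = 2 * (E 0 - E n) := by rw [← mul_sum, sum_range_sub']
    _ ≤ 2 * (f ⬝ᵥ f) := by simp only [E, pow_zero, one_mulVec] at hE ⊢; linarith

lemma summable_dirichletForm_pow_mulVec {P : Matrix V V ℝ}
    (hP : P ∈ doublyStochastic ℝ V) (hlazy : ∀ v, 1 / 2 ≤ P v v) (f : V → ℝ) :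
    Summable fun t => dirichletForm P (P ^ t *ᵥ f) :=
  summable_of_sum_range_le
    (fun _ => dirichletForm_nonneg (fun _ _ => nonneg_of_mem_doublyStochastic hP) _)
    (sum_range_dirichletForm_pow_mulVec_le hP hlazy f)

lemma tsum_dirichletForm_pow_mulVec_le {P : Matrix V V ℝ}
    (hP : P ∈ doublyStochastic ℝ V) (hlazy : ∀ v, 1 / 2 ≤ P v v) (f : V → ℝ) :
    ∑' t, dirichletForm P (P ^ t *ᵥ f) ≤ 2 * (f ⬝ᵥ f) :=
  (summable_dirichletForm_pow_mulVec hP hlazy f).tsum_le_of_sum_range_le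
    (sum_range_dirichletForm_pow_mulVec_le hP hlazy f)

lemma tsum_sum_ite_pos_sq_pow_apply_le {P : Matrix V V ℝ} (hP : P ∈ doublyStochastic ℝ V)
    (hlazy : ∀ v, 1 / 2 ≤ P v v) {K : ℝ} (hK : 0 ≤ K)
    (hpos : ∀ v u, v ≠ u → 0 < P v u → 1 ≤ K * P v u) (w : V) :
    Summable (fun t : ℕ =>
      ∑ v, ∑ u, if 0 < P v u then ((P ^ t) v w - (P ^ t) u w) ^ 2 else 0) ∧
    ∑' t : ℕ, (∑ v, ∑ u, if 0 < P v u then ((P ^ t) v w - (P ^ t) u w) ^ 2 else 0)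
      ≤ 2 * K := by
  have hnn (v u : V) : 0 ≤ P v u := nonneg_of_mem_doublyStochastic hP
  have hbound (t : ℕ) := sum_ite_pos_sq_le_mul_dirichletForm hnn hK hpos (P ^ t *ᵥ Pi.single w 1)
  simp only [mulVec_single_one, col_apply] at hbound
  have hsum := summable_dirichletForm_pow_mulVec hP hlazy (Pi.single w 1)
  have htsum := tsum_dirichletForm_pow_mulVec_le hP hlazy (Pi.single w 1)
  simp only [mulVec_single_one] at hsum htsum
  have hS : Summable _ := (hsum.mul_left K).of_nonneg_of_le
    (fun t => sum_nonneg fun v _ => sum_nonneg fun u _ => by split_ifs <;> positivity) hbound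
  refine ⟨hS, ?_⟩
  calc _ ≤ ∑' t : ℕ, K * dirichletForm P ((P ^ t).col w) :=
        hS.tsum_le_tsum hbound (hsum.mul_left K)
    _ ≤ K * (2 * (Pi.single w 1 ⬝ᵥ Pi.single w 1)) := by
        rw [tsum_mul_left]
        exact mul_le_mul_of_nonneg_left htsum hK
    _ = 2 * K := by simp only [dotProduct_single, Pi.single_eq_same, mul_one]; ring

end DoublyStochastic

section Metropolis

variable {V : Type*} [Fintype V] (G : SimpleGraph V) [DecidableRel G.Adj]

noncomputable def metropolisWeight (v u : V) : ℝ :=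
  1 / (2 * (max (G.degree v) (G.degree u) : ℝ))

variable {G}

lemma metropolisWeight_comm (v u : V) : metropolisWeight G v u = metropolisWeight G u v := by
  rw [metropolisWeight, metropolisWeight, max_comm]

lemma metropolisWeight_nonneg (v u : V) : 0 ≤ metropolisWeight G v u := by
  unfold metropolisWeight; positivity

lemma metropolisWeight_le {v : V} (hv : 0 < G.degree v) (u : V) :
    metropolisWeight G v u ≤ 1 / (2 * G.degree v) :=
  one_div_le_one_div_of_le (by positivity) (by gcongr; exact le_max_left _ _)

lemma sum_metropolisWeight_le_half (v : V) :
    ∑ u ∈ G.neighborFinset v, metropolisWeight G v u ≤ 1 / 2 := by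
  rcases (G.degree v).eq_zero_or_pos with h | h
  · rw [← G.card_neighborFinset_eq_degree, card_eq_zero] at h
    simp [h]
  calc ∑ u ∈ G.neighborFinset v, metropolisWeight G v u
      ≤ ∑ u ∈ G.neighborFinset v, 1 / (2 * (G.degree v : ℝ)) :=
        sum_le_sum fun u _ => metropolisWeight_le h u
    _ = 1 / 2 := by
        rw [sum_const, G.card_neighborFinset_eq_degree, nsmul_eq_mul]
        field_simp

variable [DecidableEq V] (G)

noncomputable def metropolisMatrix : Matrix V V ℝ := Matrix.of fun v u =>
  if G.Adj v u then metropolisWeight G v u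
  else if v = u then 1 - ∑ u' ∈ G.neighborFinset v, metropolisWeight G v u'
  else 0

lemma metropolisMatrix_apply (v u : V) : metropolisMatrix G v u =
    if G.Adj v u then metropolisWeight G v u
    else if v = u then 1 - ∑ u' ∈ G.neighborFinset v, metropolisWeight G v u'
    else 0 :=
  rfl

variable {G}

lemma metropolisMatrix_self (v : V) :
    metropolisMatrix G v v = 1 - ∑ u ∈ G.neighborFinset v, metropolisWeight G v u := by
  simp [metropolisMatrix_apply]

lemma metropolisMatrix_of_ne {v u : V} (h : v ≠ u) :
    metropolisMatrix G v u = if G.Adj v u then metropolisWeight G v u else 0 := by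
  simp [metropolisMatrix_apply, h]

lemma half_le_metropolisMatrix_self (v : V) : 1 / 2 ≤ metropolisMatrix G v v := by
  rw [metropolisMatrix_self]; linarith [sum_metropolisWeight_le_half (G := G) v]

lemma metropolisMatrix_nonneg (v u : V) : 0 ≤ metropolisMatrix G v u := by
  rcases eq_or_ne v u with rfl | h
  · linarith [half_le_metropolisMatrix_self (G := G) v]
  · rw [metropolisMatrix_of_ne h]; split_ifs
    exacts [metropolisWeight_nonneg v u, le_rfl]

lemma metropolisMatrix_comm (v u : V) : metropolisMatrix G v u = metropolisMatrix G u v := by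
  rcases eq_or_ne v u with rfl | h
  · rfl
  · simp only [metropolisMatrix_of_ne h, metropolisMatrix_of_ne h.symm, G.adj_comm,
      metropolisWeight_comm]

lemma sum_metropolisMatrix_row (v : V) : ∑ u, metropolisMatrix G v u = 1 := by
  have hoff : ∑ u ∈ univ.erase v, metropolisMatrix G v u
      = ∑ u ∈ G.neighborFinset v, metropolisWeight G v u :=
    calc ∑ u ∈ univ.erase v, metropolisMatrix G v u
        = ∑ u ∈ univ.erase v, if G.Adj v u then metropolisWeight G v u else 0 :=
          sum_congr rfl fun u hu => metropolisMatrix_of_ne (ne_of_mem_erase hu).symm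
      _ = ∑ u, if G.Adj v u then metropolisWeight G v u else 0 := sum_erase univ (by simp)
      _ = ∑ u ∈ G.neighborFinset v, metropolisWeight G v u := by
          rw [G.neighborFinset_eq_filter, sum_filter]
  rw [← add_sum_erase univ _ (mem_univ v), hoff, metropolisMatrix_self]
  ring

lemma metropolisMatrix_mem_doublyStochastic : metropolisMatrix G ∈ doublyStochastic ℝ V := by
  refine mem_doublyStochastic_iff_sum.2 ⟨metropolisMatrix_nonneg, sum_metropolisMatrix_row,
    fun u => ?_⟩
  simpa only [metropolisMatrix_comm _ u] using sum_metropolisMatrix_row u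

lemma one_le_two_mul_metropolisMatrix {dmax : ℕ} (hdmax : ∀ v, G.degree v ≤ dmax) {v u : V}
    (hvu : v ≠ u) (hpos : 0 < metropolisMatrix G v u) :
    1 ≤ 2 * dmax * metropolisMatrix G v u := by
  rw [metropolisMatrix_of_ne hvu] at hpos ⊢
  split_ifs at hpos ⊢ with hadj
  · have hdeg : (0 : ℝ) < G.degree v := by
      exact_mod_cast (G.degree_pos_iff_exists_adj v).2 ⟨u, hadj⟩
    have hmax : (max (G.degree v) (G.degree u) : ℝ) ≤ dmax := by
      exact_mod_cast max_le (hdmax v) (hdmax u)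
    rw [metropolisWeight, mul_one_div, one_le_div (by positivity)]
    linarith
  · exact absurd hpos (lt_irrefl 0)

end Metropolis

theorem local_two_divergence_metropolis_general
    {V : Type*} [Fintype V] [DecidableEq V]
    (G : SimpleGraph V) [DecidableRel G.Adj]
    (dmax : ℕ) (hdmax : ∀ v, G.degree v ≤ dmax)
    (P : Matrix V V ℝ)
    (hP : ∀ v u, P v u =
      if G.Adj v u then 1 / (2 * (max (G.degree v) (G.degree u) : ℝ))
      else if v = u then
        1 - ∑ u' ∈ G.neighborFinset v,
              1 / (2 * (max (G.degree v) (G.degree u') : ℝ))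
      else 0)
    (w : V) :
    Summable (fun t : ℕ =>
      ∑ v, ∑ u, if 0 < P v u then ((P ^ t) v w - (P ^ t) u w) ^ 2 else 0) ∧
    Real.sqrt (∑' t : ℕ,
      ∑ v, ∑ u, if 0 < P v u then ((P ^ t) v w - (P ^ t) u w) ^ 2 else 0)
      ≤ 2 * Real.sqrt dmax := by
  obtain rfl : P = metropolisMatrix G := Matrix.ext hP
  obtain ⟨hsum, htsum⟩ := tsum_sum_ite_pos_sq_pow_apply_le metropolisMatrix_mem_doublyStochastic
    half_le_metropolisMatrix_self (by positivity : (0 : ℝ) ≤ 2 * dmax)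
    (fun _ _ => one_le_two_mul_metropolisMatrix hdmax) w
  refine ⟨hsum, (Real.sqrt_le_sqrt htsum).trans_eq ?_⟩
  rw [← mul_assoc, Real.sqrt_mul (by norm_num), show (2 : ℝ) * 2 = 2 ^ 2 by norm_num,
    Real.sqrt_sq zero_le_two]

/-- For the lazy Metropolis chain on a connected graph with maximum degree
    d_max, Ψ₂(P_M) ≤ 2√(d_max). -/
theorem local_two_divergence_metropolis
    {V : Type*} [Fintype V] [DecidableEq V]
    (G : SimpleGraph V) [DecidableRel G.Adj]
    (hconn : G.Connected)
    (dmax : ℕ) (hdmax : ∀ v, G.degree v ≤ dmax)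
    (P : Matrix V V ℝ)
    (hP : ∀ v u, P v u =
      if G.Adj v u then 1 / (2 * (max (G.degree v) (G.degree u) : ℝ))
      else if v = u then
        1 - ∑ u' ∈ G.neighborFinset v,
              1 / (2 * (max (G.degree v) (G.degree u') : ℝ))
      else 0)
    (w : V) :
    Summable (fun t : ℕ =>
      ∑ v, ∑ u, if 0 < P v u then ((P ^ t) v w - (P ^ t) u w) ^ 2 else 0) ∧
    Real.sqrt (∑' t : ℕ,
      ∑ v, ∑ u, if 0 < P v u then ((P ^ t) v w - (P ^ t) u w) ^ 2 else 0)
      ≤ 2 * Real.sqrt dmax :=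
  local_two_divergence_metropolis_general G dmax hdmax P hP w
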